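/- Let G be a connected bipartite graph such that every edge of G is contained in a 4-cycle of G and every two vertices of G in the same part of the bipartition have a common neighbor. Then there exist constants c₁, c₂ > 0 and n₀ such that for all n ≥ n₀, c₁ · ex(n,G) ≤ êx_3(n,G) ≤ c₂ · ex(n,G), where ex(n,G) is the classical (graph) Turán number of G. -/

import Mathlib

/-!
For the upper bound, assign to every pair of the shadow a hyperedge containing it. A triple covers
at most three pairs, and keeping one pair for each hyperedge that is used gives a graph in which
every copy of `G` is a Berge copy, so `êx₃(n, G) ≤ 3 ex(n, G)`.

For the lower bound, the monotonicity of `ex(n, G) / (n choose 2)` gives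
`ex(n, G) ≤ 10 ex(n / 2, G)`, and a `G`-free graph on `n / 2` vertices has a bipartite subgraph
`B` with half of its edges. Replace each edge `pq` of `B`, with `p` in the first part, by the
triple `{p, q, q'}`, where `q'` is a new clone of `q`; the shadow contains `B`. A Berge copy of `G`
never uses both `q` and `q'`: a `4`-cycle through an edge, or a common neighbour of two vertices of
the same side of `G`, would put two edges of `G` on one triple or join two vertices of the first
part. So folding each clone onto its original turns a Berge copy into a copy of `G` in `B`.
-/

/-- A hypergraph `H` (given by its finite collection of hyperedges on vertex type `β`)
contains a Berge copy of the graph `G`: there is an injection of the vertices of `G`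
and an injection of the edges of `G` into hyperedges of `H` such that each edge of `G`
is contained in its corresponding hyperedge. -/
def HasBergeCopy {α β : Type*} [DecidableEq β] (G : SimpleGraph α)
    (H : Finset (Finset β)) : Prop :=
  ∃ (i : α → β) (f : Sym2 α → Finset β),
    Function.Injective i ∧ Set.InjOn f G.edgeSet ∧
    (∀ e ∈ G.edgeSet, f e ∈ H) ∧
    (∀ u v, G.Adj u v → i u ∈ f s(u, v) ∧ i v ∈ f s(u, v))

/-- The edge set of the shadow graph of a hypergraph `H`: all 2-element subsets of
vertices covered by some hyperedge of `H`. -/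
def covPairs {β : Type*} [DecidableEq β] (H : Finset (Finset β)) : Finset (Finset β) :=
  H.biUnion fun h => Finset.powersetCard 2 h

/-- The `R`-cover Turán number `êx_R(n, G)`: the maximum number of edges in the shadow
of a Berge-`G`-free `R`-graph on `n` vertices. -/
noncomputable def coverTuranNumber {α : Type*} (R : Set ℕ) (n : ℕ)
    (G : SimpleGraph α) : ℕ :=
  sSup { m | ∃ H : Finset (Finset (Fin n)),
    (∀ h ∈ H, h.card ∈ R) ∧ ¬ HasBergeCopy G H ∧ m = (covPairs H).card }

/-- The classical Turán number `ex(n, G)`: the maximum number of edges of a simple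
graph on `n` vertices containing no subgraph isomorphic to `G`. -/
noncomputable def turanNumber {α : Type*} (n : ℕ) (G : SimpleGraph α) : ℕ :=
  sSup { m | ∃ F : SimpleGraph (Fin n),
    ¬ (∃ f : G →g F, Function.Injective f) ∧ m = F.edgeSet.ncard }

open Finset SimpleGraph

theorem Sym2.toFinset_injective {β : Type*} [DecidableEq β] :
    Function.Injective (Sym2.toFinset : Sym2 β → Finset β) := fun _ _ h =>
  Sym2.ext fun x => by rw [← Sym2.mem_toFinset, h, Sym2.mem_toFinset]

theorem Finset.two_mul_card_filter_mem_iff_notMem {V : Type*} [Fintype V] [DecidableEq V]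
    {a b : V} (hab : a ≠ b) : 2 * #{s : Finset V | a ∈ s ↔ b ∉ s} = 2 ^ Fintype.card V := by
  have htoggle : #{s : Finset V | a ∈ s ↔ b ∉ s} = #{s : Finset V | ¬(a ∈ s ↔ b ∉ s)} := by
    refine card_nbij' (symmDiff · {a}) (symmDiff · {a}) ?_ ?_ ?_ ?_ <;>
      intro s <;> simp [mem_symmDiff, hab.symm, symmDiff_symmDiff_cancel_right] <;> tauto
  rw [two_mul]
  nth_rw 2 [htoggle]
  rw [card_filter_add_card_filter_not, card_univ, Fintype.card_finset]

namespace SimpleGraph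

variable {α : Type*}

theorem exists_card_edgeFinset_le_two_mul_between {V : Type*} [Fintype V] [DecidableEq V]
    (F : SimpleGraph V) [DecidableRel F.Adj] :
    ∃ s : Finset V, #F.edgeFinset ≤ 2 * #(F.between s (↑s)ᶜ).edgeFinset := by
  -- averaging over all `s`: every edge crosses exactly half of the cuts
  set E := F.edgeFinset
  have hcut (s : Finset V) :
      (F.between s (↑s)ᶜ).edgeFinset = {e ∈ E | e ∈ (F.between s (↑s)ᶜ).edgeSet} := by
    ext e
    simpa [E] using fun he => edgeSet_mono between_le he
  have hedge : ∀ e ∈ E, 2 * #{s : Finset V | e ∈ (F.between s (↑s)ᶜ).edgeSet}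
      = 2 ^ Fintype.card V := by
    intro e he
    induction e with | _ a b =>
    have hab : F.Adj a b := mem_edgeFinset.mp he
    rw [← two_mul_card_filter_mem_iff_notMem hab.ne]
    congr 2
    ext s
    simp [between_adj, hab]
    tauto
  have hswap := sum_card_bipartiteAbove_eq_sum_card_bipartiteBelow (s := univ) (t := E)
    (r := fun (s : Finset V) e => e ∈ (F.between s (↑s)ᶜ).edgeSet)
  simp only [bipartiteAbove, bipartiteBelow] at hswap
  have hsum : ∑ _s : Finset V, #E = ∑ s : Finset V, 2 * #(F.between s (↑s)ᶜ).edgeFinset :=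
    calc ∑ _s : Finset V, #E = ∑ e ∈ E, 2 ^ Fintype.card V := by
          rw [sum_const, sum_const, card_univ, Fintype.card_finset, smul_eq_mul, smul_eq_mul,
            mul_comm]
      _ = ∑ e ∈ E, 2 * #{s : Finset V | e ∈ (F.between s (↑s)ᶜ).edgeSet} :=
          sum_congr rfl fun e he => (hedge e he).symm
      _ = ∑ s : Finset V, 2 * #(F.between s (↑s)ᶜ).edgeFinset := by
          simp_rw [hcut, ← mul_sum, hswap]
  obtain ⟨s, -, hs⟩ := exists_le_of_sum_le univ_nonempty hsum.le
  exact ⟨s, hs⟩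

theorem Connected.subsingleton_of_forall_not_adj {G : SimpleGraph α} (hG : G.Connected) {x : α}
    (hx : ∀ y, ¬ G.Adj x y) : Subsingleton α := by
  have hxy : ∀ y, x = y := fun y => by
    obtain ⟨w⟩ := hG.preconnected x y
    cases w with
    | nil => rfl
    | cons h _ => exact absurd h (hx _)
  exact ⟨fun a b => (hxy a).symm.trans (hxy b)⟩

theorem isContained_iff_exists_injective {β : Type*} {G : SimpleGraph α} {F : SimpleGraph β} :
    G ⊑ F ↔ ∃ f : G →g F, Function.Injective f :=
  ⟨fun ⟨c⟩ => ⟨c.toHom, c.injective⟩, fun ⟨f, hf⟩ => ⟨f.toCopy hf⟩⟩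

theorem extremalNumber_eq_zero_of_subsingleton [Subsingleton α] (G : SimpleGraph α) {n : ℕ}
    (hn : 0 < n) : extremalNumber n G = 0 := by
  rw [← Nat.le_zero, ← Fintype.card_fin n, extremalNumber_le_iff]
  intro F _ hF
  refine absurd ⟨⟨⟨fun _ => ⟨0, hn⟩, fun {a b} h => ?_⟩, fun a b _ => Subsingleton.elim a b⟩⟩ hF
  exact absurd h (Subsingleton.elim a b ▸ G.irrefl)

theorem extremalNumber_le_ten_mul_extremalNumber_half (G : SimpleGraph α) {n : ℕ} (hn : 4 ≤ n) :
    extremalNumber n G ≤ 10 * extremalNumber (n / 2) G := by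
  set M := n / 2
  have hM : 2 ≤ M := by omega
  have hdens := antitoneOn_extremalNumber_div_choose_two G (Set.mem_Ici.mpr hM)
    (Set.mem_Ici.mpr (by omega : 2 ≤ n)) (by omega : M ≤ n)
  have hMpos : (0 : ℝ) < M.choose 2 := by exact_mod_cast Nat.choose_pos hM
  have hchoose : (n.choose 2 : ℝ) ≤ 10 * M.choose 2 := by
    have hnM : (n : ℝ) ≤ 2 * M + 1 := by exact_mod_cast (by omega : n ≤ 2 * M + 1)
    have hM' : (2 : ℝ) ≤ M := by exact_mod_cast hM
    rw [Nat.cast_choose_two, Nat.cast_choose_two]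
    nlinarith
  rw [div_le_div_iff₀ (by exact_mod_cast Nat.choose_pos (by omega : 2 ≤ n)) hMpos] at hdens
  have : (extremalNumber n G : ℝ) ≤ 10 * extremalNumber M G := by
    refine le_of_mul_le_mul_right ?_ hMpos
    calc (extremalNumber n G : ℝ) * M.choose 2 ≤ extremalNumber M G * n.choose 2 := hdens
      _ ≤ extremalNumber M G * (10 * M.choose 2) := by gcongr
      _ = 10 * extremalNumber M G * M.choose 2 := by ring
  exact_mod_cast this

end SimpleGraph

theorem turanNumber_eq_extremalNumber {α : Type*} (n : ℕ) (G : SimpleGraph α) :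
    turanNumber n G = extremalNumber n G := by
  classical
  have hbdd : BddAbove {m | ∃ F : SimpleGraph (Fin n),
      ¬ (∃ f : G →g F, Function.Injective f) ∧ m = F.edgeSet.ncard} := by
    refine ⟨Fintype.card (Sym2 (Fin n)), ?_⟩
    rintro m ⟨F, -, rfl⟩
    exact (Set.ncard_le_card _).trans_eq (by simp)
  apply le_antisymm
  · refine csSup_le' ?_
    rintro m ⟨F, hF, rfl⟩
    rw [← coe_edgeFinset, Set.ncard_coe_finset]
    simpa using card_edgeFinset_le_extremalNumber (isContained_iff_exists_injective.not.mpr hF)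
  · conv_lhs => rw [← Fintype.card_fin n]
    refine (extremalNumber_le_iff G _).mpr fun F _ hF => ?_
    refine le_csSup hbdd ⟨F, isContained_iff_exists_injective.not.mp hF, ?_⟩
    rw [← coe_edgeFinset, Set.ncard_coe_finset]

section Hypergraph

variable {α β : Type*}

def shadowGraph (H : Finset (Finset β)) : SimpleGraph β where
  Adj x y := x ≠ y ∧ ∃ h ∈ H, x ∈ h ∧ y ∈ h
  symm := ⟨fun _ _ ⟨hne, h, hH, hx, hy⟩ => ⟨hne.symm, h, hH, hy, hx⟩⟩
  loopless := ⟨fun _ h => h.1 rfl⟩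

theorem shadowGraph_adj {H : Finset (Finset β)} {x y : β} :
    (shadowGraph H).Adj x y ↔ x ≠ y ∧ ∃ h ∈ H, x ∈ h ∧ y ∈ h := Iff.rfl

variable [DecidableEq β]

instance (H : Finset (Finset β)) : DecidableRel (shadowGraph H).Adj := fun _ _ =>
  decidable_of_iff' _ shadowGraph_adj

theorem covPairs_eq_image_toFinset [Fintype β] (H : Finset (Finset β)) :
    covPairs H = (shadowGraph H).edgeFinset.image Sym2.toFinset := by
  ext p
  simp only [covPairs, mem_biUnion, mem_powersetCard, mem_image, mem_edgeFinset]
  constructor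
  · rintro ⟨h, hH, hph, hp⟩
    obtain ⟨x, y, hxy, rfl⟩ := card_eq_two.mp hp
    exact ⟨s(x, y), ⟨hxy, h, hH, hph (by simp), hph (by simp)⟩, Sym2.toFinset_mk_eq⟩
  · rintro ⟨e, he, rfl⟩
    induction e with | _ x y =>
    obtain ⟨hxy, h, hH, hx, hy⟩ := he
    refine ⟨h, hH, ?_, ?_⟩ <;> rw [Sym2.toFinset_mk_eq]
    · simp [insert_subset_iff, hx, hy]
    · exact card_pair hxy

theorem card_covPairs [Fintype β] (H : Finset (Finset β)) :
    #(covPairs H) = #(shadowGraph H).edgeFinset := by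
  rw [covPairs_eq_image_toFinset, card_image_of_injective _ Sym2.toFinset_injective]

structure IsBergeEmbedding (G : SimpleGraph α) (H : Finset (Finset β)) (i : α → β)
    (f : Sym2 α → Finset β) : Prop where
  injective : Function.Injective i
  injOn : Set.InjOn f G.edgeSet
  mem : ∀ e ∈ G.edgeSet, f e ∈ H
  incident : ∀ u v, G.Adj u v → i u ∈ f s(u, v) ∧ i v ∈ f s(u, v)

theorem hasBergeCopy_iff {G : SimpleGraph α} {H : Finset (Finset β)} :
    HasBergeCopy G H ↔ ∃ i f, IsBergeEmbedding G H i f :=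
  ⟨fun ⟨i, f, h₁, h₂, h₃, h₄⟩ => ⟨i, f, h₁, h₂, h₃, h₄⟩,
    fun ⟨i, f, h₁, h₂, h₃, h₄⟩ => ⟨i, f, h₁, h₂, h₃, h₄⟩⟩

theorem HasBergeCopy.of_isContained {G : SimpleGraph α} {H : Finset (Finset β)}
    {F : SimpleGraph β} (g : Sym2 β → Finset β) (hgH : ∀ e ∈ F.edgeSet, g e ∈ H)
    (hg : Set.InjOn g F.edgeSet) (hmem : ∀ e ∈ F.edgeSet, ∀ x ∈ e, x ∈ g e) (hGF : G ⊑ F) :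
    HasBergeCopy G H := by
  obtain ⟨c⟩ := hGF
  have hc : ∀ e ∈ G.edgeSet, e.map c ∈ F.edgeSet := fun e he => c.toHom.map_mem_edgeSet he
  refine ⟨c, fun e => g (e.map c), c.injective, ?_, fun e he => hgH _ (hc e he), ?_⟩
  · exact fun e he e' he' h => Sym2.map.injective c.injective (hg (hc e he) (hc e' he') h)
  · intro u v huv
    have := hmem _ (hc s(u, v) huv)
    simp only [Sym2.map_mk] at this ⊢
    exact ⟨this _ (Sym2.mem_mk_left _ _), this _ (Sym2.mem_mk_right _ _)⟩

theorem HasBergeCopy.of_image_map {γ : Type*} [DecidableEq γ] {G : SimpleGraph α}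
    {H : Finset (Finset β)} (ι : β ↪ γ) (hdeg : ∀ x, ∃ y, G.Adj x y)
    (h : HasBergeCopy G (H.image (·.map ι))) : HasBergeCopy G H := by
  rw [hasBergeCopy_iff] at h ⊢
  obtain ⟨i, f, hif⟩ := h
  have hf : ∀ e ∈ G.edgeSet, ∃ h ∈ H, h.map ι = f e := fun e he => mem_image.mp (hif.mem e he)
  choose! g hgH hgf using hf
  have hi : ∀ x, ∃ z, ι z = i x := fun x => by
    obtain ⟨y, hxy⟩ := hdeg x
    have hx := (hif.incident x y hxy).1
    rw [← hgf s(x, y) hxy] at hx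
    obtain ⟨z, -, hz⟩ := mem_map.mp hx
    exact ⟨z, hz⟩
  choose j hj using hi
  refine ⟨j, g, fun x y h => hif.injective (by rw [← hj x, ← hj y, h]), ?_, hgH, ?_⟩
  · exact fun e he e' he' h => hif.injOn he he' (by rw [← hgf e he, ← hgf e' he', h])
  · intro u v huv
    have := hif.incident u v huv
    rwa [← hgf s(u, v) huv, ← hj u, ← hj v, mem_map' ι, mem_map' ι] at this

end Hypergraph

section UpperBound

variable {α β : Type*} [DecidableEq β] [Fintype β]

theorem card_le_three_mul_card_image_of_cover {H : Finset (Finset β)} (hH : ∀ h ∈ H, #h = 3)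
    (t : Sym2 β → Finset β) (htH : ∀ e ∈ (shadowGraph H).edgeFinset, t e ∈ H)
    (ht : ∀ e ∈ (shadowGraph H).edgeFinset, ∀ x ∈ e, x ∈ t e) :
    #(shadowGraph H).edgeFinset ≤ 3 * #((shadowGraph H).edgeFinset.image t) := by
  refine card_le_mul_card_image _ 3 fun h hh => ?_
  obtain ⟨e₀, he₀, rfl⟩ := mem_image.mp hh
  calc #{e ∈ (shadowGraph H).edgeFinset | t e = t e₀}
      ≤ #(powersetCard 2 (t e₀)) := by
        refine card_le_card_of_injOn Sym2.toFinset (fun e he => ?_)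
          Sym2.toFinset_injective.injOn
        obtain ⟨he, hte⟩ := mem_filter.mp he
        rw [mem_coe, mem_powersetCard, ← hte]
        exact ⟨fun x hx => ht e he x (Sym2.mem_toFinset.mp hx),
          Sym2.card_toFinset_of_not_isDiag _ (not_isDiag_of_mem_edgeSet _ (mem_edgeFinset.mp he))⟩
    _ = 3 := by rw [card_powersetCard, hH _ (htH e₀ he₀)]; rfl

theorem card_edgeFinset_shadowGraph_le {G : SimpleGraph α} {H : Finset (Finset β)}
    (hH : ∀ h ∈ H, #h = 3) (hG : ¬ HasBergeCopy G H) :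
    #(shadowGraph H).edgeFinset ≤ 3 * extremalNumber (Fintype.card β) G := by
  set E := (shadowGraph H).edgeFinset
  have hcover : ∀ e ∈ E, ∃ h ∈ H, ∀ x ∈ e, x ∈ h := by
    intro e he
    induction e with | _ x y =>
    obtain ⟨-, h, hH, hx, hy⟩ := mem_edgeFinset.mp he
    exact ⟨h, hH, by simp [hx, hy]⟩
  choose! t htH ht using hcover
  obtain ⟨S, hSE, htS, hSt⟩ :=
    exists_subset_injOn_image_eq_of_surjOn (E : Set (Sym2 β)) (E.image t)
      (by rw [coe_image]; exact Set.surjOn_image _ _)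
  set F := fromEdgeSet (S : Set (Sym2 β))
  have hF : F.edgeSet = S := by
    rw [edgeSet_fromEdgeSet, sdiff_eq_left, Set.disjoint_left]
    exact fun e he => not_isDiag_of_mem_edgeSet _ (mem_edgeFinset.mp (hSE he))
  have hFE : ∀ e ∈ F.edgeSet, e ∈ E := fun e he => hSE (hF ▸ he)
  have hfree : G.Free F := fun hGF => hG <|
    HasBergeCopy.of_isContained t (fun e he => htH e (hFE e he)) (hF ▸ htS)
      (fun e he => ht e (hFE e he)) hGF
  calc #E ≤ 3 * #(E.image t) := card_le_three_mul_card_image_of_cover hH t htH ht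
    _ = 3 * #F.edgeFinset := by
      rw [← hSt, card_image_of_injOn htS, coe_inj.mp ((coe_edgeFinset F).trans hF)]
    _ ≤ 3 * extremalNumber (Fintype.card β) G :=
      Nat.mul_le_mul_left 3 (by convert card_edgeFinset_le_extremalNumber hfree)

theorem coverTuranNumber_le_three_mul_turanNumber (n : ℕ) (G : SimpleGraph α) :
    coverTuranNumber {3} n G ≤ 3 * turanNumber n G := by
  rw [turanNumber_eq_extremalNumber]
  refine csSup_le' ?_
  rintro m ⟨H, hH, hG, rfl⟩
  rw [card_covPairs]
  simpa using card_edgeFinset_shadowGraph_le hH hG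

end UpperBound

section CloneTriple

variable {α V : Type*} [DecidableEq V]

structure IsC4CoveredBipartite (G : SimpleGraph α) (U : Set α) : Prop where
  mem_iff_notMem_of_adj : ∀ u v, G.Adj u v → (u ∈ U ↔ v ∉ U)
  exists_cycle4 : ∀ u v, G.Adj u v → ∃ x y, G.Adj v x ∧ G.Adj x y ∧ G.Adj y u ∧ u ≠ x ∧ v ≠ y
  exists_common_adj : ∀ u v, u ≠ v → (u ∈ U ↔ v ∈ U) → ∃ w, G.Adj u w ∧ G.Adj v w

/-- The triple replacing an edge from the tail `p` to the head `q`; `.inr q` is the clone of `q`. -/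
def cloneTriple (p q : V) : Finset (V ⊕ V) := {.inl p, .inl q, .inr q}

theorem card_cloneTriple {p q : V} (hpq : p ≠ q) : #(cloneTriple p q) = 3 := by
  simp [cloneTriple, card_insert_of_notMem, hpq]

namespace IsBergeEmbedding

variable {G : SimpleGraph α} {T : Set V} {H : Finset (Finset (V ⊕ V))} {i : α → V ⊕ V}
  {f : Sym2 α → Finset (V ⊕ V)}

theorem not_adj_of_eq_inl_of_eq_inl (hH : ∀ h ∈ H, ∃ p ∈ T, ∃ q ∉ T, h = cloneTriple p q)
    (hif : IsBergeEmbedding G H i f) {x y : α} {p p' : V} (hp : p ∈ T) (hp' : p' ∈ T)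
    (hx : i x = .inl p) (hy : i y = .inl p') : ¬ G.Adj x y := by
  intro hxy
  obtain ⟨r, hr, q, hq, hf⟩ := hH _ (hif.mem s(x, y) hxy)
  have hmem := hif.incident x y hxy
  simp only [hf, cloneTriple, hx, hy, mem_insert, mem_singleton, Sum.inl.injEq, reduceCtorEq,
    or_false] at hmem
  have hpq : ∀ {s}, s ∈ T → s ≠ q := fun hs h => hq (h ▸ hs)
  obtain ⟨rfl | rfl, rfl | rfl⟩ := hmem
  · exact hxy.ne (hif.injective (hx.trans hy.symm))
  all_goals exact absurd rfl (hpq ‹_›)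

theorem exists_inl_of_adj_of_column (hH : ∀ h ∈ H, ∃ p ∈ T, ∃ q ∉ T, h = cloneTriple p q)
    (hif : IsBergeEmbedding G H i f) {x y : α} {v : V} (hxy : G.Adj x y) (hv : v ∉ T)
    (hx : i x = .inl v ∨ i x = .inr v) (hy : i y ≠ .inl v ∧ i y ≠ .inr v) :
    ∃ p ∈ T, i y = .inl p ∧ f s(x, y) = cloneTriple p v := by
  obtain ⟨p, hp, q, hq, hf⟩ := hH _ (hif.mem s(x, y) hxy)
  have hmem := hif.incident x y hxy
  simp only [hf, cloneTriple, mem_insert, mem_singleton] at hmem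
  have hqv : q = v := by
    rcases hx with hx | hx <;> simp only [hx, Sum.inl.injEq, reduceCtorEq, Sum.inr.injEq,
      false_or, or_false] at hmem
    · rcases hmem.1 with rfl | rfl
      · exact absurd hp hv
      · rfl
    · exact hmem.1.symm
  subst hqv
  refine ⟨p, hp, ?_, hf⟩
  tauto

theorem ne_inr_of_eq_inl {U : Set α} (hG : IsC4CoveredBipartite G U)
    (hdeg : ∀ x, ∃ y, G.Adj x y) (hH : ∀ h ∈ H, ∃ p ∈ T, ∃ q ∉ T, h = cloneTriple p q)
    (hif : IsBergeEmbedding G H i f) {a x : α} {v : V} (ha : i a = .inl v) :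
    i x ≠ .inr v := by
  intro hx
  have hv : v ∉ T := by
    obtain ⟨y, hxy⟩ := hdeg x
    obtain ⟨p, -, q, hq, hf⟩ := hH _ (hif.mem s(x, y) hxy)
    have hmem := (hif.incident x y hxy).1
    simp only [hf, cloneTriple, hx, mem_insert, mem_singleton, reduceCtorEq, Sum.inr.injEq,
      false_or] at hmem
    exact hmem ▸ hq
  have hax : a ≠ x := fun h => by simp [h, hx] at ha
  have htail : ∀ {z y}, (z = a ∨ z = x) → G.Adj z y → y ≠ a → y ≠ x →
      ∃ p ∈ T, i y = .inl p ∧ f s(z, y) = cloneTriple p v := by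
    rintro z y hz hzy hya hyx
    refine exists_inl_of_adj_of_column hH hif hzy hv ?_ ⟨?_, ?_⟩
    · rcases hz with rfl | rfl
      exacts [.inl ha, .inr hx]
    · exact fun h => hya (hif.injective (h.trans ha.symm))
    · exact fun h => hyx (hif.injective (h.trans hx.symm))
  by_cases hadj : G.Adj a x
  · obtain ⟨c, d, hxc, hcd, hda, hac, hxd⟩ := hG.exists_cycle4 a x hadj
    obtain ⟨p, hp, hc, -⟩ := htail (.inr rfl) hxc (Ne.symm hac) hxc.ne'
    obtain ⟨p', hp', hd, -⟩ := htail (.inl rfl) hda.symm hda.ne (Ne.symm hxd)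
    exact not_adj_of_eq_inl_of_eq_inl hH hif hp hp' hc hd hcd
  have hxa : ∀ {w}, G.Adj x w → w ≠ a := fun hxw h => hadj (h ▸ hxw).symm
  by_cases hside : a ∈ U ↔ x ∈ U
  · -- a common neighbour of `a` and `x` would carry the same triple on both of its edges
    obtain ⟨w, haw, hxw⟩ := hG.exists_common_adj a x hax hside
    obtain ⟨p, -, hw, hfa⟩ := htail (.inl rfl) haw haw.ne' (fun h => hadj (h ▸ haw))
    obtain ⟨p', -, hw', hfx⟩ := htail (.inr rfl) hxw (hxa hxw) hxw.ne'
    obtain rfl : p = p' := Sum.inl_injective (hw.symm.trans hw')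
    exact hax (Sym2.congr_left.mp (hif.injOn haw hxw (hfa.trans hfx.symm)))
  · obtain ⟨d, had⟩ := hdeg a
    have hdx : d ≠ x := fun h => hadj (h ▸ had)
    obtain ⟨p, hp, hd, -⟩ := htail (.inl rfl) had had.ne' hdx
    have hside' : d ∈ U ↔ x ∈ U := by have := hG.mem_iff_notMem_of_adj a d had; tauto
    obtain ⟨w, hdw, hxw⟩ := hG.exists_common_adj d x hdx hside'
    obtain ⟨p', hp', hw, -⟩ := htail (.inr rfl) hxw (hxa hxw) hxw.ne'
    exact not_adj_of_eq_inl_of_eq_inl hH hif hp hp' hd hw hdw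

end IsBergeEmbedding

theorem not_hasBergeCopy_of_forall_eq_cloneTriple {G : SimpleGraph α} {U : Set α}
    (hG : IsC4CoveredBipartite G U) (hdeg : ∀ x, ∃ y, G.Adj x y) {B : SimpleGraph V}
    (hB : G.Free B) {T : Set V} {H : Finset (Finset (V ⊕ V))}
    (hH : ∀ h ∈ H, ∃ p ∈ T, ∃ q ∉ T, B.Adj p q ∧ h = cloneTriple p q) :
    ¬ HasBergeCopy G H := by
  rw [hasBergeCopy_iff]
  rintro ⟨i, f, hif⟩
  have hH' : ∀ h ∈ H, ∃ p ∈ T, ∃ q ∉ T, h = cloneTriple p q := fun h hh => by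
    obtain ⟨p, hp, q, hq, -, rfl⟩ := hH h hh
    exact ⟨p, hp, q, hq, rfl⟩
  have hclone {a x : α} {v : V} : i a = .inl v → i x ≠ .inr v :=
    hif.ne_inr_of_eq_inl hG hdeg hH'
  let φ : α → V := fun x => Sum.elim id id (i x)
  have hφ : ∀ x, i x = .inl (φ x) ∨ i x = .inr (φ x) := fun x => by
    rcases h : i x <;> simp [φ, h]
  have hφinj : Function.Injective φ := by
    intro x y hxy
    rcases hφ x with hx | hx <;> rcases hφ y with hy | hy <;> rw [hxy] at hx
    · exact hif.injective (hx.trans hy.symm)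
    · exact absurd hy (hclone hx)
    · exact absurd hx (hclone hy)
    · exact hif.injective (hx.trans hy.symm)
  have hφadj : ∀ {x y}, G.Adj x y → B.Adj (φ x) (φ y) := by
    intro x y hxy
    obtain ⟨p, -, q, -, hpq, hf⟩ := hH _ (hif.mem s(x, y) hxy)
    have hpq' : ∀ z, i z ∈ f s(x, y) → φ z = p ∨ φ z = q := by
      intro z hz
      simp only [hf, cloneTriple, mem_insert, mem_singleton] at hz
      rcases hz with h | h | h <;> simp [φ, h]
    have hne : φ x ≠ φ y := hφinj.ne hxy.ne
    rcases hpq' x (hif.incident x y hxy).1 with h₁ | h₁ <;>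
      rcases hpq' y (hif.incident x y hxy).2 with h₂ | h₂ <;> rw [h₁, h₂] at hne ⊢
    exacts [absurd rfl hne, hpq, hpq.symm, absurd rfl hne]
  exact hB ⟨⟨⟨φ, hφadj⟩, hφinj⟩⟩

section CloneHypergraph

variable [Fintype V] {B : SimpleGraph V} [DecidableRel B.Adj] {s : Finset V}

variable (B s) in
def cloneHypergraph : Finset (Finset (V ⊕ V)) :=
  (univ.filter fun pq : V × V => B.Adj pq.1 pq.2 ∧ pq.1 ∈ s).image fun pq =>
    cloneTriple pq.1 pq.2

theorem cloneTriple_mem_cloneHypergraph {p q : V} (hpq : B.Adj p q) (hp : p ∈ s) :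
    cloneTriple p q ∈ cloneHypergraph B s :=
  mem_image_of_mem (fun pq : V × V => cloneTriple pq.1 pq.2) (a := (p, q))
    (mem_filter.mpr ⟨mem_univ _, hpq, hp⟩)

theorem exists_eq_cloneTriple_of_mem_cloneHypergraph (hBs : ∀ p q, B.Adj p q → (p ∈ s ↔ q ∉ s))
    {h : Finset (V ⊕ V)} (hh : h ∈ cloneHypergraph B s) :
    ∃ p ∈ (s : Set V), ∃ q ∉ (s : Set V), B.Adj p q ∧ h = cloneTriple p q := by
  obtain ⟨⟨p, q⟩, hpq, rfl⟩ := mem_image.mp hh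
  obtain ⟨hadj, hp⟩ := (mem_filter.mp hpq).2
  exact ⟨p, hp, q, (hBs p q hadj).mp hp, hadj, rfl⟩

theorem map_le_shadowGraph_cloneHypergraph (hBs : ∀ p q, B.Adj p q → (p ∈ s ↔ q ∉ s))
    {W : Type*} [DecidableEq W] (ι : V ⊕ V ↪ W) :
    B.map (Function.Embedding.inl.trans ι) ≤
      shadowGraph ((cloneHypergraph B s).image (·.map ι)) := by
  have hmem : ∀ {p q}, B.Adj p q → p ∈ s →
      (cloneTriple p q).map ι ∈ (cloneHypergraph B s).image (·.map ι) := fun hpq hp =>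
    mem_image_of_mem _ (cloneTriple_mem_cloneHypergraph hpq hp)
  rw [map_le_iff_le_comap]
  intro p q hpq
  refine ⟨fun h => hpq.ne (Sum.inl_injective (ι.injective h)), ?_⟩
  by_cases hp : p ∈ s
  · exact ⟨_, hmem hpq hp, by simp [cloneTriple]⟩
  · exact ⟨_, hmem hpq.symm ((hBs q p hpq.symm).mpr hp), by simp [cloneTriple]⟩

end CloneHypergraph

end CloneTriple

section LowerBound

variable {α : Type*} {G : SimpleGraph α} {U : Set α}

theorem card_covPairs_le_coverTuranNumber {n : ℕ} {H : Finset (Finset (Fin n))}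
    (hH : ∀ h ∈ H, #h = 3) (hG : ¬ HasBergeCopy G H) :
    #(covPairs H) ≤ coverTuranNumber {3} n G :=
  le_csSup ⟨Fintype.card (Finset (Fin n)), by rintro m ⟨H, -, -, rfl⟩; exact card_le_univ _⟩
    ⟨H, hH, hG, rfl⟩

theorem card_edgeFinset_le_coverTuranNumber_of_bipartite (hG : IsC4CoveredBipartite G U)
    (hdeg : ∀ x, ∃ y, G.Adj x y) {V : Type*} [Fintype V] [DecidableEq V] {B : SimpleGraph V}
    [DecidableRel B.Adj] (hB : G.Free B) (s : Finset V) (hBs : ∀ p q, B.Adj p q → (p ∈ s ↔ q ∉ s))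
    {n : ℕ} (hn : 2 * Fintype.card V ≤ n) :
    #B.edgeFinset ≤ coverTuranNumber {3} n G := by
  let ι : V ⊕ V ↪ Fin n := (Fintype.equivFin (V ⊕ V)).toEmbedding.trans
    (Fin.castLEEmb (by simpa [two_mul] using hn))
  let H := (cloneHypergraph B s).image (·.map ι)
  have hH : ∀ h ∈ H, #h = 3 := by
    intro h hh
    obtain ⟨h₀, hh₀, rfl⟩ := mem_image.mp hh
    obtain ⟨p, -, q, -, hpq, rfl⟩ := exists_eq_cloneTriple_of_mem_cloneHypergraph hBs hh₀
    rw [card_map, card_cloneTriple hpq.ne]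
  have hfree : ¬ HasBergeCopy G H := fun hGH =>
    not_hasBergeCopy_of_forall_eq_cloneTriple hG hdeg hB
      (fun _ => exists_eq_cloneTriple_of_mem_cloneHypergraph hBs) (hGH.of_image_map ι hdeg)
  calc #B.edgeFinset = #(B.map (Function.Embedding.inl.trans ι)).edgeFinset :=
        (card_edgeFinset_map _ _).symm
    _ ≤ #(shadowGraph H).edgeFinset :=
        card_le_card (edgeFinset_subset_edgeFinset.mpr (map_le_shadowGraph_cloneHypergraph hBs ι))
    _ = #(covPairs H) := (card_covPairs H).symm
    _ ≤ coverTuranNumber {3} n G := card_covPairs_le_coverTuranNumber hH hfree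

theorem extremalNumber_le_two_mul_coverTuranNumber (hG : IsC4CoveredBipartite G U)
    (hdeg : ∀ x, ∃ y, G.Adj x y) {M n : ℕ} (hMn : 2 * M ≤ n) :
    extremalNumber M G ≤ 2 * coverTuranNumber {3} n G := by
  classical
  conv_lhs => rw [← Fintype.card_fin M]
  refine (extremalNumber_le_iff G _).mpr fun F _ hF => ?_
  obtain ⟨s, hs⟩ := F.exists_card_edgeFinset_le_two_mul_between
  have hB : G.Free (F.between s (↑s)ᶜ) := fun h => hF (h.trans (.of_le between_le))
  have hBs : ∀ p q, (F.between s (↑s)ᶜ).Adj p q → (p ∈ s ↔ q ∉ s) := fun p q h => by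
    simp only [between_adj, mem_coe, Set.mem_compl_iff] at h
    tauto
  refine hs.trans (Nat.mul_le_mul_left 2 ?_)
  convert card_edgeFinset_le_coverTuranNumber_of_bipartite hG hdeg hB s hBs (by simpa using hMn)

theorem turanNumber_le_twenty_mul_coverTuranNumber (hG : IsC4CoveredBipartite G U)
    (hconn : G.Connected) {n : ℕ} (hn : 4 ≤ n) :
    turanNumber n G ≤ 20 * coverTuranNumber {3} n G := by
  rw [turanNumber_eq_extremalNumber]
  by_cases hdeg : ∀ x, ∃ y, G.Adj x y
  · calc extremalNumber n G ≤ 10 * extremalNumber (n / 2) G :=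
          extremalNumber_le_ten_mul_extremalNumber_half G hn
      _ ≤ 10 * (2 * coverTuranNumber {3} n G) :=
          Nat.mul_le_mul_left 10 (extremalNumber_le_two_mul_coverTuranNumber hG hdeg (by omega))
      _ = 20 * coverTuranNumber {3} n G := by ring
  · obtain ⟨x, hx⟩ : ∃ x, ∀ y, ¬ G.Adj x y := by simpa using hdeg
    have := hconn.subsingleton_of_forall_not_adj hx
    rw [extremalNumber_eq_zero_of_subsingleton G (by omega)]
    exact Nat.zero_le _

end LowerBound

theorem stmt9_general {α : Type*} (G : SimpleGraph α) (U : Set α)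
    (hconn : G.Connected)
    (hbip : ∀ u v : α, G.Adj u v → (u ∈ U ↔ v ∉ U))
    (hC4 : ∀ u v : α, G.Adj u v → ∃ x y : α,
      G.Adj v x ∧ G.Adj x y ∧ G.Adj y u ∧ u ≠ x ∧ v ≠ y)
    (hcommon : ∀ u v : α, u ≠ v → ((u ∈ U ∧ v ∈ U) ∨ (u ∉ U ∧ v ∉ U)) →
      ∃ w : α, G.Adj u w ∧ G.Adj v w) :
    ∃ c₁ c₂ : ℝ, 0 < c₁ ∧ 0 < c₂ ∧ ∃ n₀ : ℕ, ∀ n ≥ n₀,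
      c₁ * (turanNumber n G : ℝ) ≤ (coverTuranNumber {3} n G : ℝ) ∧
      (coverTuranNumber {3} n G : ℝ) ≤ c₂ * (turanNumber n G : ℝ) := by
  have hG : IsC4CoveredBipartite G U := ⟨hbip, hC4, fun u v huv h => hcommon u v huv (by tauto)⟩
  refine ⟨1 / 20, 3, by norm_num, by norm_num, 4, fun n hn => ⟨?_, ?_⟩⟩
  · have : (turanNumber n G : ℝ) ≤ 20 * coverTuranNumber {3} n G := by
      exact_mod_cast turanNumber_le_twenty_mul_coverTuranNumber hG hconn hn
    linarith
  · exact_mod_cast coverTuranNumber_le_three_mul_turanNumber n G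

theorem stmt9 {α : Type*} [Fintype α] (G : SimpleGraph α) (U : Set α)
    (hconn : G.Connected)
    (hbip : ∀ u v : α, G.Adj u v → (u ∈ U ↔ v ∉ U))
    (hC4 : ∀ u v : α, G.Adj u v → ∃ x y : α,
      G.Adj v x ∧ G.Adj x y ∧ G.Adj y u ∧ u ≠ x ∧ v ≠ y)
    (hcommon : ∀ u v : α, u ≠ v → ((u ∈ U ∧ v ∈ U) ∨ (u ∉ U ∧ v ∉ U)) →
      ∃ w : α, G.Adj u w ∧ G.Adj v w) :
    ∃ c₁ c₂ : ℝ, 0 < c₁ ∧ 0 < c₂ ∧ ∃ n₀ : ℕ, ∀ n ≥ n₀,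
      c₁ * (turanNumber n G : ℝ) ≤ (coverTuranNumber {3} n G : ℝ) ∧
      (coverTuranNumber {3} n G : ℝ) ≤ c₂ * (turanNumber n G : ℝ) :=
  stmt9_general G U hconn hbip hC4 hcommon
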